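/- Let σ(E) := (P/2)·((dev E + 2(tr E)·I)/Δ(E) − I) be the viscous-plastic stress with Δ(E) := sqrt(dev E : dev E + 4(tr E)² + Δ_min²) and P ≥ 0. Then the Frobenius norm of σ(E) is bounded uniformly in E: ‖σ(E)‖_F ≤ (P/2)·(‖dev E‖_F/Δ(E) + 2·√2·|tr E|/Δ(E) + √2) ≤ (P/2)·(1 + √2 + √2) , i.e. the stress is bounded independently of the strain rate E. -/

import Mathlib

open Matrix

noncomputable def frob (A B : Matrix (Fin 2) (Fin 2) ℝ) : ℝ := ∑ i, ∑ j, A i j * B i j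

noncomputable def frobNorm (A : Matrix (Fin 2) (Fin 2) ℝ) : ℝ := Real.sqrt (frob A A)

noncomputable def dev (E : Matrix (Fin 2) (Fin 2) ℝ) : Matrix (Fin 2) (Fin 2) ℝ :=
  E - (E.trace / 2) • 1

noncomputable def Δd (dmin : ℝ) (E : Matrix (Fin 2) (Fin 2) ℝ) : ℝ :=
  Real.sqrt (frob (dev E) (dev E) + 4 * E.trace ^ 2 + dmin ^ 2)

noncomputable def stress (P dmin : ℝ) (E : Matrix (Fin 2) (Fin 2) ℝ) :
    Matrix (Fin 2) (Fin 2) ℝ :=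
  (P / 2) • ((Δd dmin E)⁻¹ • (dev E + (2 * E.trace) • 1) - 1)

/-!
Write `σ(E) = (P/2) • (Δ⁻¹ • (dev E + (2 tr E) • I) - I)` and apply the triangle inequality
to the three summands; this gives the first bound. Since `Δ² = ‖dev E‖² + (2 tr E)² + Δ_min²`,
both `‖dev E‖ / Δ` and `2 |tr E| / Δ` are at most `1`, which gives the second.
-/

theorem norm_inv_smul_add_smul_sub_le {V : Type*} [SeminormedAddCommGroup V] [NormedSpace ℝ V]
    {Δ : ℝ} (hΔ : 0 ≤ Δ) (x y : V) (s : ℝ) :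
    ‖Δ⁻¹ • (x + s • y) - y‖ ≤ ‖x‖ / Δ + |s| * ‖y‖ / Δ + ‖y‖ :=
  calc ‖Δ⁻¹ • (x + s • y) - y‖ ≤ ‖Δ⁻¹ • x‖ + ‖Δ⁻¹ • s • y‖ + ‖y‖ := by
        rw [smul_add]; exact (norm_sub_le _ _).trans (by gcongr; exact norm_add_le _ _)
    _ = ‖x‖ / Δ + |s| * ‖y‖ / Δ + ‖y‖ := by
        simp only [norm_smul, norm_inv, Real.norm_eq_abs, abs_of_nonneg hΔ]
        ring

theorem abs_div_sqrt_sq_add_le_one (x r : ℝ) (hr : 0 ≤ r) : |x| / √(x ^ 2 + r) ≤ 1 :=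
  div_le_one_of_le₀ (Real.abs_le_sqrt (by linarith)) (Real.sqrt_nonneg _)

theorem frob_self_nonneg (A : Matrix (Fin 2) (Fin 2) ℝ) : 0 ≤ frob A A :=
  Finset.sum_nonneg fun i _ ↦ Finset.sum_nonneg fun j _ ↦ mul_self_nonneg (A i j)

theorem frobNorm_nonneg (A : Matrix (Fin 2) (Fin 2) ℝ) : 0 ≤ frobNorm A := Real.sqrt_nonneg _

theorem Δd_nonneg (dmin : ℝ) (E : Matrix (Fin 2) (Fin 2) ℝ) : 0 ≤ Δd dmin E := Real.sqrt_nonneg _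

section Frobenius

attribute [local instance] Matrix.frobeniusNormedAddCommGroup Matrix.frobeniusNormedSpace

theorem frobNorm_eq_norm (A : Matrix (Fin 2) (Fin 2) ℝ) : frobNorm A = ‖A‖ := by
  rw [frobNorm, frob, frobenius_norm_def, Real.sqrt_eq_rpow]
  simp only [Real.norm_eq_abs, Real.rpow_two, sq, abs_mul_abs_self]

theorem frobNorm_one : frobNorm (1 : Matrix (Fin 2) (Fin 2) ℝ) = √2 := by
  norm_num [frobNorm, frob, Fin.sum_univ_two]

theorem frobNorm_stress_le (P dmin : ℝ) (hP : 0 ≤ P) (E : Matrix (Fin 2) (Fin 2) ℝ) :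
    frobNorm (stress P dmin E) ≤
      (P / 2) * (frobNorm (dev E) / Δd dmin E + 2 * √2 * |E.trace| / Δd dmin E + √2) := by
  have h := norm_inv_smul_add_smul_sub_le (Δd_nonneg dmin E) (dev E) 1 (2 * E.trace)
  rw [← frobNorm_eq_norm, ← frobNorm_eq_norm, ← frobNorm_eq_norm, frobNorm_one] at h
  rw [stress, frobNorm_eq_norm, norm_smul, Real.norm_of_nonneg (by positivity),
    ← frobNorm_eq_norm]
  gcongr
  refine h.trans_eq ?_
  rw [abs_mul, abs_two]
  ring

end Frobenius

theorem Δd_eq (dmin : ℝ) (E : Matrix (Fin 2) (Fin 2) ℝ) :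
    Δd dmin E = √(frobNorm (dev E) ^ 2 + (2 * E.trace) ^ 2 + dmin ^ 2) := by
  rw [Δd, frobNorm, Real.sq_sqrt (frob_self_nonneg _)]
  ring_nf

theorem frobNorm_dev_div_Δd_le_one (dmin : ℝ) (E : Matrix (Fin 2) (Fin 2) ℝ) :
    frobNorm (dev E) / Δd dmin E ≤ 1 := by
  have h := abs_div_sqrt_sq_add_le_one (frobNorm (dev E)) ((2 * E.trace) ^ 2 + dmin ^ 2)
    (by positivity)
  rwa [abs_of_nonneg (frobNorm_nonneg _), ← add_assoc, ← Δd_eq] at h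

theorem two_mul_abs_trace_div_Δd_le_one (dmin : ℝ) (E : Matrix (Fin 2) (Fin 2) ℝ) :
    2 * |E.trace| / Δd dmin E ≤ 1 := by
  have h := abs_div_sqrt_sq_add_le_one (2 * E.trace) (frobNorm (dev E) ^ 2 + dmin ^ 2)
    (by positivity)
  rwa [abs_mul, abs_two, add_left_comm, ← add_assoc, ← Δd_eq] at h

theorem stress_bounded_general (P dmin : ℝ) (hP : 0 ≤ P)
    (E : Matrix (Fin 2) (Fin 2) ℝ) :
    frobNorm (stress P dmin E) ≤
      (P / 2) * (frobNorm (dev E) / Δd dmin E + 2 * Real.sqrt 2 * |E.trace| / Δd dmin E +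
        Real.sqrt 2) ∧
    (P / 2) * (frobNorm (dev E) / Δd dmin E + 2 * Real.sqrt 2 * |E.trace| / Δd dmin E +
        Real.sqrt 2) ≤ (P / 2) * (1 + Real.sqrt 2 + Real.sqrt 2) := by
  refine ⟨frobNorm_stress_le P dmin hP E, ?_⟩
  have hdev := frobNorm_dev_div_Δd_le_one dmin E
  have htr : √2 * (2 * |E.trace| / Δd dmin E) ≤ √2 :=
    mul_le_of_le_one_right (Real.sqrt_nonneg 2) (two_mul_abs_trace_div_Δd_le_one dmin E)
  rw [show 2 * √2 * |E.trace| / Δd dmin E = √2 * (2 * |E.trace| / Δd dmin E) by ring]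
  gcongr

theorem stress_bounded (P dmin : ℝ) (hP : 0 ≤ P) (hdmin : 0 < dmin)
    (E : Matrix (Fin 2) (Fin 2) ℝ) (hE : E.IsSymm) :
    frobNorm (stress P dmin E) ≤
      (P / 2) * (frobNorm (dev E) / Δd dmin E + 2 * Real.sqrt 2 * |E.trace| / Δd dmin E +
        Real.sqrt 2) ∧
    (P / 2) * (frobNorm (dev E) / Δd dmin E + 2 * Real.sqrt 2 * |E.trace| / Δd dmin E +
        Real.sqrt 2) ≤ (P / 2) * (1 + Real.sqrt 2 + Real.sqrt 2) :=
  stress_bounded_general P dmin hP E
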